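/- Assume additionally that M = AᵀΣ_obs⁻¹A is invertible, and let λ ∈ ℝ^d have positive entries. For w ∈ ℝ^d with strictly positive entries define F(w) = −Σ_{i=1}^d λ_i w_i − (1/2)·log det(Λ_w^{1/2} M Λ_w^{1/2} + I) + (1/2)·yᵀΣ_obs⁻¹A Λ_w^{1/2}(Λ_w^{1/2} M Λ_w^{1/2} + I)⁻¹ Λ_w^{1/2} AᵀΣ_obs⁻¹y (the log unnormalized posterior mixing density for the Laplace prior). Then for every such w and every index i, the i-th partial derivative of F at w exists and equals −λ_i − (1/2)·[(M⁻¹ + Λ_w)⁻¹]_{ii} + (1/2)·z_i², where z = (M⁻¹ + Λ_w)⁻¹ M⁻¹ AᵀΣ_obs⁻¹ y. (Gradient formula (C.2) of the log posterior mixing density.) -/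

import Mathlib

open Matrix MeasureTheory Real

/-!
Write `S = Λ_w^{1/2}` and `P = M⁻¹ + Λ_w`. Sylvester's identity `det (1 + XY) = det (1 + YX)`
gives `det (SMS + 1) = det M · det P`, and the push-through identity
`(SMS + 1)⁻¹ S = S P⁻¹ M⁻¹` gives `S (SMS + 1)⁻¹ S = M⁻¹ - M⁻¹ P⁻¹ M⁻¹`. Hence, with
`v = M⁻¹ Aᵀ Σ_obs⁻¹ y`, `F(w) = -λ ⬝ w - ½ log det P - ½ vᵀ P⁻¹ v` up to a constant.
Moving `wᵢ` adds a multiple of the matrix unit `Eᵢᵢ` to `P`: the determinant is then affine in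
`wᵢ` with slope the cofactor `det P · (P⁻¹)ᵢᵢ`, and by Sherman–Morrison `vᵀ P⁻¹ v` is a rational
function of `wᵢ` with derivative `-((P⁻¹ v)ᵢ)² = -zᵢ²`.
-/

/-- The log unnormalized posterior mixing density for the Laplace prior:
`F(w) = −∑ᵢ λᵢwᵢ − ½ log det(Λ_w^{1/2} M Λ_w^{1/2} + I)
        + ½ yᵀΣ_obs⁻¹A Λ_w^{1/2}(Λ_w^{1/2} M Λ_w^{1/2} + I)⁻¹Λ_w^{1/2} AᵀΣ_obs⁻¹ y`,
where `M = AᵀΣ_obs⁻¹A`, `Λ_w = diag(w)` and `Λ_w^{1/2} = diag(√w)`. -/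
noncomputable def logMixPosterior {d m : ℕ}
    (A : Matrix (Fin m) (Fin d) ℝ) (Sobs : Matrix (Fin m) (Fin m) ℝ)
    (lam : Fin d → ℝ) (y : Fin m → ℝ) (w : Fin d → ℝ) : ℝ :=
  -(∑ i, lam i * w i)
    - (1 / 2) * Real.log ((Matrix.diagonal (fun i => Real.sqrt (w i))
        * (Aᵀ * Sobs⁻¹ * A) * Matrix.diagonal (fun i => Real.sqrt (w i)) + 1).det)
    + (1 / 2) * (y ⬝ᵥ (Sobs⁻¹ * A * Matrix.diagonal (fun i => Real.sqrt (w i))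
        * (Matrix.diagonal (fun i => Real.sqrt (w i)) * (Aᵀ * Sobs⁻¹ * A)
            * Matrix.diagonal (fun i => Real.sqrt (w i)) + 1)⁻¹
        * Matrix.diagonal (fun i => Real.sqrt (w i)) * Aᵀ * Sobs⁻¹).mulVec y)

open Filter Topology

theorem Pi.update_eq_add_sub_smul_single {ι R : Type*} [DecidableEq ι] [Ring R] (w : ι → R)
    (i : ι) (t : R) :
    Function.update w i t = w + (t - w i) • Pi.single i 1 := by
  ext j
  rcases eq_or_ne j i with rfl | hj
  · simp
  · simp [hj]

namespace Matrix

theorem diagonal_update_eq_add_smul_single {n R : Type*} [DecidableEq n] [Ring R] (w : n → R)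
    (i : n) (t : R) :
    diagonal (Function.update w i t) = diagonal w + (t - w i) • single i i 1 := by
  rw [Pi.update_eq_add_sub_smul_single, ← diagonal_single, ← diagonal_smul, diagonal_add]
  rfl

section CommRing

variable {n α : Type*} [CommRing α]

theorem dotProduct_transpose_mul_mul_mulVec [Fintype n] {m : Type*} [Fintype m]
    (B : Matrix m n α) (X : Matrix m m α) (x : n → α) :
    x ⬝ᵥ (Bᵀ * X * B) *ᵥ x = (B *ᵥ x) ⬝ᵥ X *ᵥ (B *ᵥ x) := by
  rw [← mulVec_mulVec, ← mulVec_mulVec, dotProduct_mulVec, vecMul_transpose]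

variable [DecidableEq n]

theorem add_smul_single_eq_updateRow (P : Matrix n n α) (i : n) (s : α) :
    P + s • single i i 1 = P.updateRow i (P i + s • Pi.single i 1) := by
  ext j k
  rcases eq_or_ne j i with rfl | hj
  · simp [Pi.single_apply, single_apply, eq_comm]
  · simp [updateRow_ne hj, single_apply_of_row_ne hj.symm]

variable [Fintype n]

theorem det_add_smul_single (P : Matrix n n α) (i : n) (s : α) :
    (P + s • single i i 1).det = P.det + s * P.adjugate i i := by
  rw [add_smul_single_eq_updateRow, det_updateRow_add, det_updateRow_smul, updateRow_eq_self,
    adjugate_apply]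

theorem dotProduct_mul_single_mul_mulVec {m : Type*} [Fintype m] [DecidableEq m]
    (u : n → α) (A : Matrix n n α) (i : n) (j : m) (B : Matrix m m α) (v : m → α) :
    u ⬝ᵥ (A * single i j (1 : α) * B) *ᵥ v = (u ᵥ* A) i * (B *ᵥ v) j := by
  rw [← mulVec_mulVec, ← mulVec_mulVec, dotProduct_mulVec, single_mulVec, one_mul,
    ← Pi.single, dotProduct_single]

end CommRing

section Field

variable {n α : Type*} [Fintype n] [DecidableEq n] [Field α]

theorem inv_apply_eq_adjugate_div_det (P : Matrix n n α) (i j : n) :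
    P⁻¹ i j = P.adjugate i j / P.det := by
  rw [inv_def, smul_apply, Ring.inverse_eq_inv', smul_eq_mul, inv_mul_eq_div]

/-- The Sherman–Morrison formula for a perturbation of one diagonal entry. -/
theorem inv_add_smul_single {P : Matrix n n α} (hP : IsUnit P.det) (i : n) {s : α}
    (hs : 1 + s * P⁻¹ i i ≠ 0) :
    (P + s • single i i 1)⁻¹ = P⁻¹ - (s / (1 + s * P⁻¹ i i)) • (P⁻¹ * single i i 1 * P⁻¹) := by
  apply inv_eq_right_inv
  set E : Matrix n n α := single i i 1
  set k := s / (1 + s * P⁻¹ i i)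
  have hE : E * P⁻¹ * E = P⁻¹ i i • E := by
    rw [single_mul_mul_single, one_mul, mul_one, smul_single, smul_eq_mul, mul_one]
  have hk : k + s * k * P⁻¹ i i = s := by
    simp only [k]; field_simp
  calc (P + s • E) * (P⁻¹ - k • (P⁻¹ * E * P⁻¹))
      = P * P⁻¹ - k • (P * P⁻¹ * E * P⁻¹) + s • (E * P⁻¹) - (k * s) • (E * P⁻¹ * E * P⁻¹) := by
        simp only [add_mul, mul_sub, Matrix.mul_smul, Matrix.smul_mul, smul_smul, mul_assoc]
        abel
    _ = 1 + (s - (k + s * k * P⁻¹ i i)) • (E * P⁻¹) := by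
        rw [hE, mul_nonsing_inv _ hP, one_mul, Matrix.smul_mul, smul_smul]
        module
    _ = 1 := by rw [hk, sub_self, zero_smul, add_zero]

theorem dotProduct_inv_add_smul_single_mulVec {P : Matrix n n α} (hP : IsUnit P.det) (i : n)
    {s : α} (hs : 1 + s * P⁻¹ i i ≠ 0) (u v : n → α) :
    u ⬝ᵥ (P + s • single i i 1)⁻¹ *ᵥ v
      = u ⬝ᵥ P⁻¹ *ᵥ v - s * ((u ᵥ* P⁻¹) i * (P⁻¹ *ᵥ v) i) / (1 + s * P⁻¹ i i) := by
  rw [inv_add_smul_single hP i hs, sub_mulVec, smul_mulVec, dotProduct_sub, dotProduct_smul,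
    dotProduct_mul_single_mul_mulVec, smul_eq_mul, div_mul_eq_mul_div]

theorem det_mul_mul_add_one {M : Matrix n n α} (hM : IsUnit M.det) (S : Matrix n n α) :
    (S * M * S + 1).det = M.det * (M⁻¹ + S * S).det := by
  rw [mul_assoc, det_mul_add_one_comm, ← det_mul, mul_add, mul_nonsing_inv _ hM, mul_assoc,
    add_comm]

theorem mul_inv_mul_mul_add_one_mul {M : Matrix n n α} (hM : IsUnit M.det) {S : Matrix n n α}
    (hP : IsUnit (M⁻¹ + S * S).det) :
    S * (S * M * S + 1)⁻¹ * S = M⁻¹ - M⁻¹ * (M⁻¹ + S * S)⁻¹ * M⁻¹ := by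
  set P := M⁻¹ + S * S
  have hX : IsUnit (S * M * S + 1).det := by
    rw [det_mul_mul_add_one hM]; exact hM.mul hP
  have hpush : (S * M * S + 1) * (S * P⁻¹ * M⁻¹) = S := by
    calc (S * M * S + 1) * (S * P⁻¹ * M⁻¹) = S * (M * P) * P⁻¹ * M⁻¹ := by
          simp only [P, mul_add, add_mul, mul_nonsing_inv _ hM]; noncomm_ring
      _ = S * (M * (P * P⁻¹) * M⁻¹) := by simp only [mul_assoc]
      _ = S := by rw [mul_nonsing_inv _ hP, mul_one, mul_nonsing_inv _ hM, mul_one]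
  have hpull : (S * M * S + 1)⁻¹ * S = S * P⁻¹ * M⁻¹ := by
    calc (S * M * S + 1)⁻¹ * S = (S * M * S + 1)⁻¹ * ((S * M * S + 1) * (S * P⁻¹ * M⁻¹)) := by
          rw [hpush]
      _ = S * P⁻¹ * M⁻¹ := nonsing_inv_mul_cancel_left _ _ hX
  calc S * (S * M * S + 1)⁻¹ * S = (P - M⁻¹) * P⁻¹ * M⁻¹ := by
        rw [mul_assoc, hpull, add_sub_cancel_left, mul_assoc, mul_assoc, mul_assoc]
    _ = M⁻¹ - M⁻¹ * P⁻¹ * M⁻¹ := by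
        rw [sub_mul, mul_nonsing_inv _ hP, sub_mul, one_mul]

end Field

theorem PosDef.transpose_mul_inv_mul {n m : Type*} [Fintype n] [DecidableEq n] [Fintype m]
    [DecidableEq m] {S : Matrix m m ℝ} (hS : S.PosDef) {A : Matrix m n ℝ}
    (hM : IsUnit (Aᵀ * S⁻¹ * A)) : (Aᵀ * S⁻¹ * A).PosDef :=
  (PosSemidef.posDef_iff_isUnit (by simpa using hS.inv.posSemidef.conjTranspose_mul_mul_same A)).mpr
    hM

theorem PosDef.inv_add_diagonal {n : Type*} [Fintype n] [DecidableEq n]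
    {M : Matrix n n ℝ} (hM : M.PosDef) {u : n → ℝ} (hu : 0 ≤ u) : (M⁻¹ + diagonal u).PosDef :=
  hM.inv.add_posSemidef (posSemidef_diagonal_iff.mpr hu)

section Deriv

variable {n : Type*} [Fintype n] [DecidableEq n]

theorem hasDerivAt_log_det_add_smul_single {P : Matrix n n ℝ} (hP : P.det ≠ 0) (i : n) :
    HasDerivAt (fun s : ℝ => Real.log (P + s • single i i 1).det) (P⁻¹ i i) 0 := by
  simp only [det_add_smul_single]
  have hlin : HasDerivAt (fun s : ℝ => P.det + s * P.adjugate i i) (P.adjugate i i) 0 := by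
    simpa using ((hasDerivAt_id (0 : ℝ)).mul_const (P.adjugate i i)).const_add P.det
  simpa [inv_apply_eq_adjugate_div_det] using hlin.log (by simpa using hP)

theorem hasDerivAt_dotProduct_inv_add_smul_single_mulVec {𝕜 : Type*} [NontriviallyNormedField 𝕜]
    {P : Matrix n n 𝕜} (hP : IsUnit P.det) (i : n) (u v : n → 𝕜) :
    HasDerivAt (fun s : 𝕜 => u ⬝ᵥ (P + s • single i i 1)⁻¹ *ᵥ v)
      (-((u ᵥ* P⁻¹) i * (P⁻¹ *ᵥ v) i)) 0 := by
  set a := (u ᵥ* P⁻¹) i * (P⁻¹ *ᵥ v) i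
  set c := P⁻¹ i i
  have hden : ∀ᶠ s : 𝕜 in 𝓝 0, 1 + s * c ≠ 0 :=
    (continuous_const.add (continuous_id.mul continuous_const)).continuousAt.eventually_ne
      (by simp)
  have hrat : HasDerivAt (fun s : 𝕜 => u ⬝ᵥ P⁻¹ *ᵥ v - s * a / (1 + s * c)) (-a) 0 := by
    have h := (((hasDerivAt_id (0 : 𝕜)).mul_const a).div
      (((hasDerivAt_id (0 : 𝕜)).mul_const c).const_add 1) (by simp)).const_sub (u ⬝ᵥ P⁻¹ *ᵥ v)
    simpa using h
  refine hrat.congr_of_eventuallyEq ?_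
  filter_upwards [hden] with s hs
  exact dotProduct_inv_add_smul_single_mulVec hP i hs u v

theorem hasDerivAt_log_det_add_dotProduct_inv_mulVec {P : Matrix n n ℝ} (hPs : P.IsSymm)
    (hP : IsUnit P.det) (i : n) (v : n → ℝ) :
    HasDerivAt
      (fun s : ℝ => Real.log (P + s • single i i 1).det + v ⬝ᵥ (P + s • single i i 1)⁻¹ *ᵥ v)
      (P⁻¹ i i - (P⁻¹ *ᵥ v) i ^ 2) 0 := by
  have hvP : v ᵥ* P⁻¹ = P⁻¹ *ᵥ v := by rw [← mulVec_transpose, hPs.inv.eq]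
  refine ((hasDerivAt_log_det_add_smul_single hP.ne_zero i).add
    (hasDerivAt_dotProduct_inv_add_smul_single_mulVec hP i v v)).congr_deriv ?_
  rw [hvP]
  ring

end Deriv

end Matrix

theorem logMixPosterior_eq {d m : ℕ} (A : Matrix (Fin m) (Fin d) ℝ)
    {Sobs : Matrix (Fin m) (Fin m) ℝ} (hS : Sobs.IsSymm) (lam : Fin d → ℝ) (y : Fin m → ℝ)
    {w : Fin d → ℝ} (hw : 0 ≤ w) (hM : IsUnit (Aᵀ * Sobs⁻¹ * A).det)
    (hP : IsUnit ((Aᵀ * Sobs⁻¹ * A)⁻¹ + diagonal w).det) :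
    logMixPosterior A Sobs lam y w =
      -(lam ⬝ᵥ w)
        - (1 / 2) * (Real.log (Aᵀ * Sobs⁻¹ * A).det
          + Real.log ((Aᵀ * Sobs⁻¹ * A)⁻¹ + diagonal w).det)
        + (1 / 2) * (((Aᵀ * Sobs⁻¹) *ᵥ y) ⬝ᵥ (Aᵀ * Sobs⁻¹ * A)⁻¹ *ᵥ ((Aᵀ * Sobs⁻¹) *ᵥ y)
          - ((Aᵀ * Sobs⁻¹ * A)⁻¹ *ᵥ ((Aᵀ * Sobs⁻¹) *ᵥ y))
            ⬝ᵥ ((Aᵀ * Sobs⁻¹ * A)⁻¹ + diagonal w)⁻¹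
              *ᵥ ((Aᵀ * Sobs⁻¹ * A)⁻¹ *ᵥ ((Aᵀ * Sobs⁻¹) *ᵥ y))) := by
  set M := Aᵀ * Sobs⁻¹ * A
  set B := Aᵀ * Sobs⁻¹
  set S := diagonal fun j => √(w j)
  have hSS : S * S = diagonal w := by
    rw [diagonal_mul_diagonal]
    exact congrArg diagonal (funext fun j => Real.mul_self_sqrt (hw j))
  have hMinv : M⁻¹ᵀ = M⁻¹ := by
    have hMt : Mᵀ = M := by
      simp only [M, transpose_mul, transpose_transpose, hS.inv.eq, Matrix.mul_assoc]
    rw [transpose_nonsing_inv, hMt]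
  have hBt : Bᵀ = Sobs⁻¹ * A := by rw [transpose_mul, hS.inv.eq, transpose_transpose]
  have hquad : Sobs⁻¹ * A * S * (S * M * S + 1)⁻¹ * S * Aᵀ * Sobs⁻¹
      = Bᵀ * (M⁻¹ - M⁻¹ * (M⁻¹ + diagonal w)⁻¹ * M⁻¹) * B := by
    rw [hBt, ← hSS, ← mul_inv_mul_mul_add_one_mul hM (hSS ▸ hP)]
    simp only [B, Matrix.mul_assoc]
  have hMquad := dotProduct_transpose_mul_mul_mulVec M⁻¹ (M⁻¹ + diagonal w)⁻¹ (B *ᵥ y)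
  rw [hMinv] at hMquad
  unfold logMixPosterior
  rw [det_mul_mul_add_one hM, hSS, Real.log_mul hM.ne_zero hP.ne_zero, hquad,
    dotProduct_transpose_mul_mul_mulVec, sub_mulVec, dotProduct_sub, hMquad]
  rfl

theorem gradient_log_posterior_mixing_general
    (d m : ℕ)
    (A : Matrix (Fin m) (Fin d) ℝ)
    (Sobs : Matrix (Fin m) (Fin m) ℝ) (hSobs : Sobs.PosDef)
    (y : Fin m → ℝ)
    (hM : IsUnit (Aᵀ * Sobs⁻¹ * A))
    (lam : Fin d → ℝ) :
    ∀ w : Fin d → ℝ, (∀ i, 0 < w i) → ∀ i : Fin d,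
      HasDerivAt (fun t : ℝ => logMixPosterior A Sobs lam y (Function.update w i t))
        (-lam i
          - (1 / 2) * (((Aᵀ * Sobs⁻¹ * A)⁻¹ + Matrix.diagonal w)⁻¹ i i)
          + (1 / 2) * ((((Aᵀ * Sobs⁻¹ * A)⁻¹ + Matrix.diagonal w)⁻¹
              * (Aᵀ * Sobs⁻¹ * A)⁻¹ * Aᵀ * Sobs⁻¹).mulVec y i) ^ 2)
        (w i) := by
  intro w hw i
  have hSymm : Sobs.IsSymm := isHermitian_iff_isSymm.mp hSobs.isHermitian
  have hMpd := hSobs.transpose_mul_inv_mul hM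
  set M := Aᵀ * Sobs⁻¹ * A
  set P := M⁻¹ + diagonal w
  set b := (Aᵀ * Sobs⁻¹) *ᵥ y
  set v := M⁻¹ *ᵥ b
  have hP : P.PosDef := hMpd.inv_add_diagonal fun j => (hw j).le
  have hF : (fun t => logMixPosterior A Sobs lam y (Function.update w i t)) =ᶠ[𝓝 (w i)]
      fun t => (-(lam ⬝ᵥ w) - (1 / 2) * Real.log M.det + (1 / 2) * (b ⬝ᵥ M⁻¹ *ᵥ b))
        - ((t - w i) * lam i + (1 / 2) * (Real.log (P + (t - w i) • single i i 1).det
          + v ⬝ᵥ (P + (t - w i) • single i i 1)⁻¹ *ᵥ v)) := by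
    filter_upwards [Ioi_mem_nhds (hw i)] with t ht
    have hu : 0 ≤ Function.update w i t := le_update_iff.mpr ⟨ht.le, fun j _ => (hw j).le⟩
    rw [logMixPosterior_eq A hSymm lam y hu ((isUnit_iff_isUnit_det M).mp hM)
      ((isUnit_iff_isUnit_det _).mp (hMpd.inv_add_diagonal hu).isUnit),
      diagonal_update_eq_add_smul_single, Pi.update_eq_add_sub_smul_single w i t,
      dotProduct_add, dotProduct_smul, dotProduct_single, smul_eq_mul, mul_one, ← add_assoc]
    ring
  have hH := hasDerivAt_log_det_add_dotProduct_inv_mulVec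
    (isHermitian_iff_isSymm.mp hP.isHermitian) ((isUnit_iff_isUnit_det P).mp hP.isUnit) i v
  rw [← sub_self (w i)] at hH
  have hz : (P⁻¹ * M⁻¹ * Aᵀ * Sobs⁻¹) *ᵥ y = P⁻¹ *ᵥ v := by
    simp only [v, b, mulVec_mulVec, Matrix.mul_assoc]
  rw [hz]
  refine HasDerivAt.congr_of_eventuallyEq ?_ hF
  refine ((((hasDerivAt_id (w i)).sub_const (w i)).mul_const (lam i)).add
    ((hH.comp_sub_const (w i) (w i)).const_mul (1 / 2))).const_sub _ |>.congr_deriv ?_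
  ring

/-- Gradient formula (C.2) of the log posterior mixing density: on the positive
orthant, the `i`-th partial derivative of `F` exists and equals
`−λᵢ − ½ [(M⁻¹ + Λ_w)⁻¹]ᵢᵢ + ½ zᵢ²` with `z = (M⁻¹ + Λ_w)⁻¹ M⁻¹ AᵀΣ_obs⁻¹ y`. -/
theorem gradient_log_posterior_mixing
    (d m : ℕ) (hd : 0 < d) (hm : 0 < m)
    (A : Matrix (Fin m) (Fin d) ℝ)
    (Sobs : Matrix (Fin m) (Fin m) ℝ) (hSobs : Sobs.PosDef)
    (y : Fin m → ℝ)
    (hM : IsUnit (Aᵀ * Sobs⁻¹ * A))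
    (lam : Fin d → ℝ) (hlam : ∀ i, 0 < lam i) :
    ∀ w : Fin d → ℝ, (∀ i, 0 < w i) → ∀ i : Fin d,
      HasDerivAt (fun t : ℝ => logMixPosterior A Sobs lam y (Function.update w i t))
        (-lam i
          - (1 / 2) * (((Aᵀ * Sobs⁻¹ * A)⁻¹ + Matrix.diagonal w)⁻¹ i i)
          + (1 / 2) * ((((Aᵀ * Sobs⁻¹ * A)⁻¹ + Matrix.diagonal w)⁻¹
              * (Aᵀ * Sobs⁻¹ * A)⁻¹ * Aᵀ * Sobs⁻¹).mulVec y i) ^ 2)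
        (w i) :=
  gradient_log_posterior_mixing_general d m A Sobs hSobs y hM lam
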